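/- Every full-rank lattice L ⊆ ℝⁿ has a Korkine–Zolotarev basis: there exists a ℤ-basis (b_1, …, b_n) of L such that, writing (b'_1, …, b'_n) for its Gram–Schmidt orthogonalization with coefficients μ_{i,j} = ⟨b_i, b'_j⟩/⟨b'_j, b'_j⟩ and L_{i−1} for the sublattice generated by b_1, …, b_{i−1}: for every 1 ≤ i ≤ n, b'_i is a shortest nonzero vector of the quotient lattice L/L_{i−1} (the orthogonal projection of L onto the orthogonal complement of span(b_1, …, b_{i−1})), and |μ_{i,j}| ≤ 1/2 for all 1 ≤ j < i ≤ n. -/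

import Mathlib

open Metric Submodule
open scoped RealInnerProductSpace
noncomputable section

/-- The image of the set `A` under the orthogonal projection onto the orthogonal complement
of the real span of `S`. -/
def projPerp {n : ℕ} (S A : Set (EuclideanSpace ℝ (Fin n))) : Set (EuclideanSpace ℝ (Fin n)) :=
  (fun x => ((orthogonalProjection (Submodule.span ℝ S)ᗮ) x : EuclideanSpace ℝ (Fin n))) '' A

/-- The Gram–Schmidt orthogonalization of the sequence `b`. -/
def gramSchmidtVec {n : ℕ} (b : Fin n → EuclideanSpace ℝ (Fin n)) :
    Fin n → EuclideanSpace ℝ (Fin n) :=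
  @InnerProductSpace.gramSchmidt ℝ _ _ _ _ (Fin n) _ inferInstance (inferInstance : WellFoundedLT (Fin n)) b

/-!
The basis is built one vector at a time. Suppose `b₁, …, b_k ∈ L` are primitive, i.e. every
lattice vector in their real span `W` is an integer combination of them. Each point of the
projection of `L` onto `Wᗮ` lifts to a lattice vector at bounded distance from it, so that
projection is discrete and has a shortest nonzero element `π x`. Subtracting suitable integer
multiples of `b_k, …, b₁`, in this order, from `x` makes all `|μ_{k+1,j}| ≤ 1/2` without moving
`π x`. Minimality of `π x` keeps `b₁, …, b_k, x` primitive: a lattice vector `c • x + w` with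
`w ∈ W` and `c ∉ ℤ` would project to the shorter nonzero vector `fract c • π x`. After `n` steps
primitivity says that the `b_i` generate `L`.
-/

open InnerProductSpace

section GramSchmidt

variable {𝕜 E ι : Type*} [RCLike 𝕜] [NormedAddCommGroup E] [InnerProductSpace 𝕜 E]
  [LinearOrder ι] [LocallyFiniteOrderBot ι] [WellFoundedLT ι]

theorem gramSchmidt_mem_orthogonal_span_Iio (f : ι → E) (i : ι) :
    gramSchmidt 𝕜 f i ∈ (span 𝕜 (f '' Set.Iio i))ᗮ := by
  rw [← span_gramSchmidt_Iio, mem_orthogonal]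
  intro u hu
  induction hu using span_induction with
  | mem _ hu =>
    obtain ⟨j, hj, rfl⟩ := hu
    exact gramSchmidt_orthogonal 𝕜 f (ne_of_lt hj)
  | zero => exact inner_zero_left _
  | add _ _ _ _ hx hy => rw [inner_add_left, hx, hy, add_zero]
  | smul _ _ _ hx => rw [inner_smul_left, hx, mul_zero]

theorem sub_gramSchmidt_mem_span_Iio (f : ι → E) (i : ι) :
    f i - gramSchmidt 𝕜 f i ∈ span 𝕜 (f '' Set.Iio i) := by
  rw [← span_gramSchmidt_Iio, gramSchmidt_def, sub_sub_cancel]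
  refine sum_mem fun j hj => ?_
  refine span_mono ?_ (starProjection_apply_mem _ _)
  exact Set.singleton_subset_iff.mpr (Set.mem_image_of_mem _ (Finset.mem_Iio.mp hj))

theorem gramSchmidt_eq_starProjection (f : ι → E) (i : ι)
    [(span 𝕜 (f '' Set.Iio i)).HasOrthogonalProjection] :
    gramSchmidt 𝕜 f i = (span 𝕜 (f '' Set.Iio i))ᗮ.starProjection (f i) :=
  (eq_starProjection_of_mem_orthogonal (gramSchmidt_mem_orthogonal_span_Iio f i)
    (le_orthogonal_orthogonal _ (sub_gramSchmidt_mem_span_Iio f i))).symm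

theorem gramSchmidt_congr {f g : ι → E} {i : ι} (h : ∀ j ≤ i, f j = g j) :
    gramSchmidt 𝕜 f i = gramSchmidt 𝕜 g i := by
  have hspan : span 𝕜 (g '' Set.Iio i) = span 𝕜 (f '' Set.Iio i) := by
    rw [Set.image_congr fun j (hj : j ∈ Set.Iio i) => h j (le_of_lt hj)]
  have hmem : gramSchmidt 𝕜 g i - gramSchmidt 𝕜 f i ∈ span 𝕜 (f '' Set.Iio i) := by
    have := sub_mem (sub_gramSchmidt_mem_span_Iio (𝕜 := 𝕜) f i)
      (hspan ▸ sub_gramSchmidt_mem_span_Iio (𝕜 := 𝕜) g i)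
    rwa [h i le_rfl, sub_sub_sub_cancel_left] at this
  have hperp : gramSchmidt 𝕜 g i - gramSchmidt 𝕜 f i ∈ (span 𝕜 (f '' Set.Iio i))ᗮ :=
    sub_mem (hspan ▸ gramSchmidt_mem_orthogonal_span_Iio g i)
      (gramSchmidt_mem_orthogonal_span_Iio f i)
  exact (sub_eq_zero.mp (disjoint_def.mp (orthogonal_disjoint _) _ hmem hperp)).symm

theorem inner_gramSchmidt_eq_inner_self (f : ι → E) (i : ι) :
    ⟪f i, gramSchmidt 𝕜 f i⟫_𝕜 = ⟪gramSchmidt 𝕜 f i, gramSchmidt 𝕜 f i⟫_𝕜 := by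
  rw [← sub_eq_zero, ← inner_sub_left]
  exact inner_right_of_mem_orthogonal (sub_gramSchmidt_mem_span_Iio f i)
    (gramSchmidt_mem_orthogonal_span_Iio f i)

theorem linearIndependent_of_gramSchmidt_ne_zero [Fintype ι] {f : ι → E}
    (h : ∀ i, gramSchmidt 𝕜 f i ≠ 0) : LinearIndependent 𝕜 f := by
  have hgs : LinearIndependent 𝕜 (gramSchmidt 𝕜 f) :=
    linearIndependent_of_ne_zero_of_inner_eq_zero h fun _ _ => gramSchmidt_orthogonal 𝕜 f
  rw [linearIndependent_iff_card_eq_finrank_span] at hgs ⊢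
  rwa [Set.finrank, ← span_gramSchmidt 𝕜 f]

end GramSchmidt

section SizeReduction

variable {E ι : Type*} [NormedAddCommGroup E] [InnerProductSpace ℝ E]
  [LinearOrder ι] [LocallyFiniteOrderBot ι] [WellFoundedLT ι]

/-- The coefficient `μ` of `x` along the `j`-th Gram–Schmidt vector of `f`; it is `0` when that
vector vanishes. -/
def gramSchmidtCoeff (f : ι → E) (x : E) (j : ι) : ℝ :=
  ⟪x, gramSchmidt ℝ f j⟫ / ⟪gramSchmidt ℝ f j, gramSchmidt ℝ f j⟫

theorem gramSchmidtCoeff_sub_smul (f : ι → E) (x y : E) (c : ℝ) (j : ι) :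
    gramSchmidtCoeff f (x - c • y) j = gramSchmidtCoeff f x j - c * gramSchmidtCoeff f y j := by
  simp only [gramSchmidtCoeff, inner_sub_left, real_inner_smul_left, sub_div, mul_div_assoc]

theorem gramSchmidtCoeff_self (f : ι → E) {i : ι} (hi : gramSchmidt ℝ f i ≠ 0) :
    gramSchmidtCoeff f (f i) i = 1 := by
  rw [gramSchmidtCoeff, inner_gramSchmidt_eq_inner_self, div_self (inner_self_ne_zero.mpr hi)]

theorem gramSchmidtCoeff_of_lt (f : ι → E) {i j : ι} (hij : i < j) :
    gramSchmidtCoeff f (f i) j = 0 := by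
  rw [gramSchmidtCoeff, real_inner_comm, gramSchmidt_inv_triangular ℝ f hij, zero_div]

theorem exists_sub_mem_span_int_abs_gramSchmidtCoeff_le (f : ι → E) (s : Finset ι) (x : E) :
    ∃ y, x - y ∈ span ℤ (f '' s) ∧ ∀ j ∈ s, |gramSchmidtCoeff f y j| ≤ 1 / 2 := by
  classical
  induction s using Finset.induction_on_min with
  | empty => exact ⟨x, by simp, by simp⟩
  | insert a s has ih =>
    obtain ⟨y, hxy, hy⟩ := ih
    -- subtracting a multiple of `f a` leaves the coefficients along `f'_j`, `j > a`, unchanged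
    set c := round (gramSchmidtCoeff f y a)
    refine ⟨y - (c : ℝ) • f a, ?_, fun j hj => ?_⟩
    · rw [sub_sub_eq_add_sub, add_sub_right_comm, Int.cast_smul_eq_zsmul, Finset.coe_insert,
        Set.image_insert_eq]
      exact add_mem (span_mono (Set.subset_insert _ _) hxy)
        (zsmul_mem (subset_span (Set.mem_insert _ _)) c)
    rw [gramSchmidtCoeff_sub_smul]
    rcases Finset.mem_insert.mp hj with rfl | hj
    · by_cases h0 : gramSchmidt ℝ f j = 0
      · simp [gramSchmidtCoeff, h0]
      · rw [gramSchmidtCoeff_self f h0, mul_one]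
        exact abs_sub_round _
    · rw [gramSchmidtCoeff_of_lt f (has j hj), mul_zero, sub_zero]
      exact hy j hj

end SizeReduction

def IsShortestNonzero {E : Type*} [Norm E] [Zero E] (A : Set E) (p : E) : Prop :=
  p ∈ A ∧ p ≠ 0 ∧ ∀ w ∈ A, w ≠ 0 → ‖p‖ ≤ ‖w‖

theorem exists_isShortestNonzero {E : Type*} [SeminormedAddCommGroup E] {A : Set E}
    (hA : ∀ R, (A ∩ closedBall 0 R).Finite) {x : E} (hx : x ∈ A) (hx0 : x ≠ 0) :
    ∃ p, IsShortestNonzero A p := by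
  obtain ⟨p, ⟨⟨hpA, -⟩, hp0⟩, hmin⟩ := Set.exists_min_image ((A ∩ closedBall 0 ‖x‖) \ {0}) norm
    (hA _).sdiff ⟨x, ⟨hx, mem_closedBall_zero_iff.mpr le_rfl⟩, hx0⟩
  refine ⟨p, hpA, hp0, fun w hw hw0 => ?_⟩
  rcases le_or_gt ‖w‖ ‖x‖ with hwx | hxw
  · exact hmin w ⟨⟨hw, mem_closedBall_zero_iff.mpr hwx⟩, hw0⟩
  · exact (hmin x ⟨⟨hx, mem_closedBall_zero_iff.mpr le_rfl⟩, hx0⟩).trans hxw.le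

theorem exists_mem_span_int_norm_sub_le {E : Type*} [NormedAddCommGroup E] [NormedSpace ℝ E]
    (s : Finset E) {x : E} (hx : x ∈ span ℝ (s : Set E)) :
    ∃ u ∈ span ℤ (s : Set E), ‖x - u‖ ≤ ∑ v ∈ s, ‖v‖ := by
  obtain ⟨c, -, rfl⟩ := mem_span_finset.mp hx
  refine ⟨∑ v ∈ s, ⌊c v⌋ • v, sum_mem fun v hv => zsmul_mem (subset_span hv) _, ?_⟩
  have hfract : ∑ v ∈ s, c v • v - ∑ v ∈ s, ⌊c v⌋ • v = ∑ v ∈ s, Int.fract (c v) • v := by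
    rw [← Finset.sum_sub_distrib]
    refine Finset.sum_congr rfl fun v _ => ?_
    rw [← Int.cast_smul_eq_zsmul ℝ, ← sub_smul, Int.self_sub_floor]
  rw [hfract]
  refine (norm_sum_le _ _).trans (Finset.sum_le_sum fun v _ => ?_)
  rw [norm_smul, Real.norm_of_nonneg (Int.fract_nonneg _)]
  exact mul_le_of_le_one_left (norm_nonneg v) (Int.fract_lt_one _).le

theorem Submodule.finite_inter_closedBall {E : Type*} [NormedAddCommGroup E] [ProperSpace E]
    (L : Submodule ℤ E) [DiscreteTopology L] (R : ℝ) :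
    ((L : Set E) ∩ closedBall 0 R).Finite := by
  rw [Set.inter_comm]
  exact finite_isBounded_inter_isClosed (isDiscrete_iff_discreteTopology.mpr ‹_›)
    isBounded_closedBall (AddSubgroup.isClosed_of_discrete (H := L.toAddSubgroup))

section Lattice

variable {E : Type*} [NormedAddCommGroup E] [InnerProductSpace ℝ E] [FiniteDimensional ℝ E]

theorem Submodule.finite_image_starProjection_inter_closedBall (L : Submodule ℤ E)
    [DiscreteTopology L] {S : Set E} (hS : S.Finite) (hSL : S ⊆ L) (R : ℝ) :
    ((span ℝ S)ᗮ.starProjection '' L ∩ closedBall 0 R).Finite := by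
  set P := (span ℝ S)ᗮ.starProjection
  -- every projected lattice vector lifts to a lattice vector at most `C` longer
  set C := ∑ v ∈ hS.toFinset, ‖v‖
  refine ((L.finite_inter_closedBall (R + C)).image P).subset ?_
  rintro _ ⟨⟨z, hz, rfl⟩, hzR⟩
  have hzW : z - P z ∈ span ℝ S := by
    simpa only [orthogonal_orthogonal] using sub_starProjection_mem_orthogonal (K := (span ℝ S)ᗮ) z
  obtain ⟨u, hu, huz⟩ := exists_mem_span_int_norm_sub_le hS.toFinset (x := z - P z) (by simpa)
  rw [Set.Finite.coe_toFinset] at hu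
  have hPu : P u = 0 := (starProjection_apply_eq_zero_iff _).mpr
    (le_orthogonal_orthogonal _ (span_subset_span ℤ ℝ S hu))
  refine ⟨z - u, ⟨sub_mem hz (span_le.mpr hSL hu), mem_closedBall_zero_iff.mpr ?_⟩, ?_⟩
  · calc ‖z - u‖ = ‖P z + (z - P z - u)‖ := by congr 1; abel
      _ ≤ R + C := norm_add_le_of_le (mem_closedBall_zero_iff.mp hzR) huz
  · rw [map_sub, hPu, sub_zero]

theorem Submodule.exists_mem_starProjection_ne_zero (L : Submodule ℤ E)
    (hL : span ℝ (L : Set E) = ⊤) {W : Submodule ℝ E} (hW : W ≠ ⊤) :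
    ∃ x ∈ L, Wᗮ.starProjection x ≠ 0 := by
  by_contra! h
  refine hW (eq_top_iff.mpr (hL ▸ span_le.mpr fun x hx => ?_))
  simpa using (starProjection_apply_eq_zero_iff _).mp (h x hx)

theorem mem_span_int_insert_of_isShortestNonzero {L : Submodule ℤ E} {S : Set E}
    (hS : ∀ x ∈ L, x ∈ span ℝ S → x ∈ span ℤ S) {y : E} (hy : y ∈ L)
    (hmin : IsShortestNonzero ((span ℝ S)ᗮ.starProjection '' L)
      ((span ℝ S)ᗮ.starProjection y))
    {z : E} (hz : z ∈ L) (hzS : z ∈ span ℝ (insert y S)) : z ∈ span ℤ (insert y S) := by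
  set P := (span ℝ S)ᗮ.starProjection
  obtain ⟨c, w, hw, rfl⟩ := mem_span_insert.mp hzS
  have hPw : P w = 0 := (starProjection_apply_eq_zero_iff _).mpr (le_orthogonal_orthogonal _ hw)
  -- `c • y + w - ⌊c⌋ • y` is a lattice vector projecting to `fract c • P y`, shorter than `P y`
  have hv : c • y + w - ⌊c⌋ • y ∈ L := sub_mem hz (zsmul_mem hy _)
  have hPv : P (c • y + w - ⌊c⌋ • y) = Int.fract c • P y := by
    rw [map_sub, map_add, hPw, add_zero, map_zsmul, map_smul, ← Int.cast_smul_eq_zsmul ℝ,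
      ← sub_smul, Int.self_sub_floor]
  have hfract : Int.fract c = 0 := by
    by_contra h
    have hle := hmin.2.2 _ ⟨_, hv, hPv⟩ (hPv ▸ smul_ne_zero h hmin.2.1)
    rw [norm_smul, Real.norm_of_nonneg (Int.fract_nonneg c)] at hle
    exact (Int.fract_lt_one c).not_ge
      (le_of_mul_le_mul_right (by rwa [one_mul]) (norm_pos_iff.mpr hmin.2.1))
  have hc : (⌊c⌋ : ℝ) = c := by simpa [hfract] using Int.floor_add_fract c
  have hwL : w ∈ L := by rwa [← Int.cast_smul_eq_zsmul ℝ, hc, add_sub_cancel_left] at hv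
  rw [← hc, Int.cast_smul_eq_zsmul]
  exact add_mem (zsmul_mem (subset_span (Set.mem_insert _ _)) _)
    (span_mono (Set.subset_insert _ _) (hS w hwL hw))

end Lattice

section KorkineZolotarev

variable {E : Type*} [NormedAddCommGroup E] [InnerProductSpace ℝ E] [FiniteDimensional ℝ E]
  {n : ℕ}

structure IsKZPrefix (L : Submodule ℤ E) (b : Fin n → E) (k : ℕ) : Prop where
  mem : ∀ j : Fin n, (j : ℕ) < k → b j ∈ L
  primitive : ∀ x ∈ L, x ∈ span ℝ (b '' {j | (j : ℕ) < k}) →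
    x ∈ span ℤ (b '' {j | (j : ℕ) < k})
  shortest : ∀ i : Fin n, (i : ℕ) < k →
    IsShortestNonzero ((span ℝ (b '' Set.Iio i))ᗮ.starProjection '' L) (gramSchmidt ℝ b i)
  sizeReduced : ∀ i j : Fin n, (i : ℕ) < k → j < i → |gramSchmidtCoeff b (b i) j| ≤ 1 / 2

namespace IsKZPrefix

variable {L : Submodule ℤ E}

theorem zero (b : Fin n → E) : IsKZPrefix L b 0 where
  mem _ h := absurd h (Nat.not_lt_zero _)
  primitive x _ hx := by simpa using hx
  shortest _ h := absurd h (Nat.not_lt_zero _)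
  sizeReduced _ _ h := absurd h (Nat.not_lt_zero _)

theorem update {b : Fin n → E} {i : Fin n} (h : IsKZPrefix L b i) {y : E} (hy : y ∈ L)
    (hmin : IsShortestNonzero ((span ℝ (b '' Set.Iio i))ᗮ.starProjection '' L)
      ((span ℝ (b '' Set.Iio i))ᗮ.starProjection y))
    (hred : ∀ j < i, |gramSchmidtCoeff b y j| ≤ 1 / 2) :
    IsKZPrefix L (Function.update b i y) (i + 1) := by
  set b' := Function.update b i y
  have hb'i : b' i = y := Function.update_self i y b
  have hb' : ∀ j < i, b' j = b j := fun j hj => Function.update_of_ne hj.ne _ _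
  have himage : ∀ j ≤ i, b' '' Set.Iio j = b '' Set.Iio j := fun j hj =>
    Set.image_congr fun l hl => hb' l (lt_of_lt_of_le hl hj)
  have hgs : ∀ j < i, gramSchmidt ℝ b' j = gramSchmidt ℝ b j := fun j hj =>
    gramSchmidt_congr fun l hl => hb' l (lt_of_le_of_lt hl hj)
  have hcoeff : ∀ x, ∀ j < i, gramSchmidtCoeff b' x j = gramSchmidtCoeff b x j := by
    intro x j hj
    simp only [gramSchmidtCoeff, hgs j hj]
  have hle : ∀ j : Fin n, (j : ℕ) < i + 1 ↔ j ≤ i := fun j => Nat.lt_succ_iff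
  have hIic : b' '' {j | (j : ℕ) < i + 1} = insert y (b '' Set.Iio i) := by
    rw [show {j : Fin n | (j : ℕ) < i + 1} = insert i (Set.Iio i) by
      ext j; simp [hle, le_iff_lt_or_eq, or_comm], Set.image_insert_eq, hb'i, himage i le_rfl]
  refine ⟨fun j hj => ?_, ?_, fun j hj => ?_, fun j l hj hl => ?_⟩
  · rcases ((hle j).mp hj).lt_or_eq with hj | rfl
    · rw [hb' j hj]; exact h.mem j hj
    · rwa [hb'i]
  · rw [hIic]
    exact fun x hx => mem_span_int_insert_of_isShortestNonzero h.primitive hy hmin hx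
  · rcases ((hle j).mp hj).lt_or_eq with hj | rfl
    · rw [hgs j hj, himage j hj.le]; exact h.shortest j hj
    · rwa [gramSchmidt_eq_starProjection, himage j le_rfl, hb'i]
  · rcases ((hle j).mp hj).lt_or_eq with hj | rfl
    · rw [hb' j hj, hcoeff _ l (hl.trans hj)]; exact h.sizeReduced j l hj hl
    · rw [hb'i, hcoeff _ l hl]; exact hred l hl

theorem exists_succ {b : Fin n → E} {k : ℕ} (h : IsKZPrefix L b k) [DiscreteTopology L]
    (hL : span ℝ (L : Set E) = ⊤) (hn : Module.finrank ℝ E = n) (hk : k < n) :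
    ∃ b' : Fin n → E, IsKZPrefix L b' (k + 1) := by
  classical
  set i : Fin n := ⟨k, hk⟩
  set S := b '' Set.Iio i
  set P := (span ℝ S)ᗮ.starProjection
  have hS : S = ((Finset.Iio i).image b : Set E) := by simp [S]
  have hSL : S ⊆ L := Set.image_subset_iff.mpr fun j hj => h.mem j hj
  have hW : span ℝ S ≠ ⊤ := by
    intro hW
    have := (finrank_span_finset_le_card (R := ℝ) ((Finset.Iio i).image b)).trans
      Finset.card_image_le
    rw [← hS, Set.finrank, hW, finrank_top, hn, Fin.card_Iio] at this
    exact hk.not_ge this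
  obtain ⟨x₀, hx₀L, hx₀⟩ := L.exists_mem_starProjection_ne_zero hL hW
  obtain ⟨p, hp⟩ := exists_isShortestNonzero
    (L.finite_image_starProjection_inter_closedBall ((Set.finite_Iio i).image b) hSL)
    ⟨x₀, hx₀L, rfl⟩ hx₀
  obtain ⟨x, hxL, rfl⟩ := hp.1
  obtain ⟨y, hxy, hred⟩ := exists_sub_mem_span_int_abs_gramSchmidtCoeff_le b (Finset.Iio i) x
  rw [Finset.coe_Iio] at hxy
  have hPy : P y = P x := by
    rw [eq_comm, ← sub_eq_zero, ← map_sub, starProjection_apply_eq_zero_iff]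
    exact le_orthogonal_orthogonal _ (span_subset_span ℤ ℝ S hxy)
  exact ⟨_, h.update (sub_sub_cancel x y ▸ sub_mem hxL (span_le.mpr hSL hxy)) (hPy ▸ hp)
    fun j hj => hred j (Finset.mem_Iio.mpr hj)⟩

theorem linearIndependent {b : Fin n → E} (h : IsKZPrefix L b n) : LinearIndependent ℝ b :=
  linearIndependent_of_gramSchmidt_ne_zero fun i => (h.shortest i i.2).2.1

theorem span_int_eq {b : Fin n → E} (h : IsKZPrefix L b n) (hn : Module.finrank ℝ E = n) :
    span ℤ (Set.range b) = L := by
  have hrange : b '' {j : Fin n | (j : ℕ) < n} = Set.range b := by simp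
  have htop : span ℝ (Set.range b) = ⊤ :=
    h.linearIndependent.span_eq_top_of_card_eq_finrank' (by simp [hn])
  refine le_antisymm (span_le.mpr (Set.range_subset_iff.mpr fun j => h.mem j j.2)) fun x hx => ?_
  rw [← hrange]
  exact h.primitive x hx (by rw [hrange, htop]; trivial)

end IsKZPrefix

theorem exists_isKZPrefix (L : Submodule ℤ E) [DiscreteTopology L]
    (hL : span ℝ (L : Set E) = ⊤) (hn : Module.finrank ℝ E = n) (k : ℕ) (hk : k ≤ n) :
    ∃ b : Fin n → E, IsKZPrefix L b k := by
  induction k with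
  | zero => exact ⟨0, .zero 0⟩
  | succ k ih =>
    obtain ⟨b, hb⟩ := ih (Nat.le_of_succ_le hk)
    exact hb.exists_succ hL hn hk

end KorkineZolotarev

theorem exists_korkine_zolotarev_basis
    (n : ℕ) (L : Submodule ℤ (EuclideanSpace ℝ (Fin n))) [DiscreteTopology L]
    (hL : IsZLattice ℝ L) :
    ∃ b : Fin n → EuclideanSpace ℝ (Fin n),
      Submodule.span ℤ (Set.range b) = L ∧ LinearIndependent ℝ b ∧
      (∀ i : Fin n,
        gramSchmidtVec b i ∈ projPerp (b '' {j | j < i}) (L : Set (EuclideanSpace ℝ (Fin n))) ∧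
        gramSchmidtVec b i ≠ 0 ∧
        ∀ w ∈ projPerp (b '' {j | j < i}) (L : Set (EuclideanSpace ℝ (Fin n))),
          w ≠ 0 → ‖gramSchmidtVec b i‖ ≤ ‖w‖) ∧
      (∀ i j : Fin n, j < i →
        |⟪b i, gramSchmidtVec b j⟫ / ⟪gramSchmidtVec b j, gramSchmidtVec b j⟫| ≤ 1 / 2) := by
  obtain ⟨b, hb⟩ := exists_isKZPrefix L hL.span_top finrank_euclideanSpace_fin n le_rfl
  -- `projPerp` and `gramSchmidtVec` unfold to `starProjection` images and `gramSchmidt`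
  exact ⟨b, hb.span_int_eq finrank_euclideanSpace_fin, hb.linearIndependent,
    fun i => hb.shortest i i.2, fun i j hji => hb.sizeReduced i j i.2 hji⟩
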